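/- Let U ∈ ℝ^{m×r} and V ∈ ℝ^{n×r} have orthonormal columns, and define the linear map P_T(M) = UUᵀM + MVVᵀ − UUᵀMVVᵀ on ℝ^{m×n}. Then for any M and any ρ > 0, the entry-wise infinity norm of P_T(M) satisfies ‖P_T(M)‖_∞ ≤ ‖UUᵀ‖_∞‖M‖_{1→1} + ‖VVᵀ‖_∞‖M‖_{∞→∞} + ‖U‖_{2→∞}‖V‖_{2→∞}‖M‖_{2→2}. -/

import Mathlib

/-!
Each entry of `P_T(M) = UUᵀM + MVVᵀ - UUᵀMVVᵀ` is bounded term by term. The first two terms are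
controlled by pairing a row of `UUᵀ` (resp. a column of `VVᵀ`) entrywise with a column (resp. row)
of `M`. The entry `(i, j)` of the third term is `⟨(UUᵀ)ᵢ, M (VVᵀ)ⱼ⟩`, so by Cauchy–Schwarz it is
at most `‖(UUᵀ)ᵢ‖₂ ‖M‖₂ ‖(VVᵀ)ⱼ‖₂`; since `UUᵀ` is a symmetric idempotent,
`‖(UUᵀ)ᵢ‖₂² = (UUᵀ)ᵢᵢ = ‖Uᵢ‖₂²`, and likewise for `V`.
-/

open scoped BigOperators
open Matrix
noncomputable section

namespace SLR

/-- Trace inner product `⟨A,B⟩ = tr(AᵀB)`. -/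
def inner' {m n : ℕ} (A B : Matrix (Fin m) (Fin n) ℝ) : ℝ := ∑ i, ∑ j, A i j * B i j

/-- Entrywise 1-norm. -/
def l1 {m n : ℕ} (M : Matrix (Fin m) (Fin n) ℝ) : ℝ := ∑ i, ∑ j, |M i j|

/-- Entrywise ∞-norm (maximum absolute value of an entry). -/
def linf {m n : ℕ} (M : Matrix (Fin m) (Fin n) ℝ) : ℝ := ⨆ i, ⨆ j, |M i j|

/-- Frobenius norm. -/
def frob {m n : ℕ} (M : Matrix (Fin m) (Fin n) ℝ) : ℝ :=
  Real.sqrt (∑ i, ∑ j, (M i j) ^ 2)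

/-- `‖M‖_{1→1}`: maximum column absolute sum. -/
def n11 {m n : ℕ} (M : Matrix (Fin m) (Fin n) ℝ) : ℝ := ⨆ j, ∑ i, |M i j|

/-- `‖M‖_{∞→∞}`: maximum row absolute sum. -/
def nII {m n : ℕ} (M : Matrix (Fin m) (Fin n) ℝ) : ℝ := ⨆ i, ∑ j, |M i j|

/-- Spectral norm `‖M‖_{2→2}`. -/
def spec {m n : ℕ} (M : Matrix (Fin m) (Fin n) ℝ) : ℝ :=
  ‖LinearMap.toContinuousLinearMap (Matrix.toEuclideanLin M)‖

/-- Trace (nuclear) norm: sum of singular values. -/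
def traceNorm {m n : ℕ} (M : Matrix (Fin m) (Fin n) ℝ) : ℝ :=
  ∑ i, Real.sqrt ((show (Mᵀ * M).IsHermitian by
    simpa [Matrix.conjTranspose_eq_transpose_of_trivial] using
      Matrix.isHermitian_conjTranspose_mul_self M).eigenvalues i)

/-- The hybrid norm `‖M‖_{♯(ρ)} = max{ρ‖M‖_{1→1}, ρ⁻¹‖M‖_{∞→∞}}`. -/
def sharp {m n : ℕ} (ρ : ℝ) (M : Matrix (Fin m) (Fin n) ℝ) : ℝ :=
  max (ρ * n11 M) (ρ⁻¹ * nII M)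

/-- The dual norm `‖·‖_{♭(ρ)}` of `‖·‖_{♯(ρ)}`. -/
def flat {m n : ℕ} (ρ : ℝ) (M : Matrix (Fin m) (Fin n) ℝ) : ℝ :=
  sSup {x : ℝ | ∃ N : Matrix (Fin m) (Fin n) ℝ, sharp ρ N ≤ 1 ∧ x = inner' M N}

/-- Induced operator norm of a map `T` with respect to the norm `f`. -/
def opNormWrt {m n : ℕ} (f : Matrix (Fin m) (Fin n) ℝ → ℝ)
    (T : Matrix (Fin m) (Fin n) ℝ → Matrix (Fin m) (Fin n) ℝ) : ℝ :=
  sSup {x : ℝ | ∃ M, f M ≤ 1 ∧ x = f (T M)}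

/-- Entrywise sign matrix. -/
def signM {m n : ℕ} (M : Matrix (Fin m) (Fin n) ℝ) : Matrix (Fin m) (Fin n) ℝ :=
  Matrix.of fun i j => Real.sign (M i j)

/-- Orthogonal projection onto matrices supported on `supp X`. -/
def POmega {m n : ℕ} (X : Matrix (Fin m) (Fin n) ℝ) (M : Matrix (Fin m) (Fin n) ℝ) :
    Matrix (Fin m) (Fin n) ℝ :=
  Matrix.of fun i j => if X i j ≠ 0 then M i j else 0

/-- Orthogonal projection onto the tangent space `T` determined by `U`, `V`. -/
def PT {m n r : ℕ} (U : Matrix (Fin m) (Fin r) ℝ) (V : Matrix (Fin n) (Fin r) ℝ)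
    (M : Matrix (Fin m) (Fin n) ℝ) : Matrix (Fin m) (Fin n) ℝ :=
  U * Uᵀ * M + M * (V * Vᵀ) - U * Uᵀ * M * (V * Vᵀ)

/-- `‖U‖_{2→∞}`: maximum row Euclidean norm. -/
def two2inf {m r : ℕ} (U : Matrix (Fin m) (Fin r) ℝ) : ℝ :=
  ⨆ i, Real.sqrt (∑ k, (U i k) ^ 2)

/-- The sparsity measure `α(ρ)` of `X̄_S`. -/
def alpha {m n : ℕ} (X : Matrix (Fin m) (Fin n) ℝ) (ρ : ℝ) : ℝ :=
  max (ρ * n11 (signM X)) (ρ⁻¹ * nII (signM X))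

/-- The incoherence measure `β(ρ)` of the singular vectors `U`, `V`. -/
def beta {m n r : ℕ} (U : Matrix (Fin m) (Fin r) ℝ) (V : Matrix (Fin n) (Fin r) ℝ)
    (ρ : ℝ) : ℝ :=
  ρ⁻¹ * linf (U * Uᵀ) + ρ * linf (V * Vᵀ) + two2inf U * two2inf V

/-- Number of nonzero entries. -/
def suppCard {m n : ℕ} (X : Matrix (Fin m) (Fin n) ℝ) : ℕ :=
  (Finset.univ.filter fun p : Fin m × Fin n => X p.1 p.2 ≠ 0).card

open scoped Matrix.Norms.L2Operator

section Norms

variable {m n : ℕ}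

theorem abs_apply_le_linf (A : Matrix (Fin m) (Fin n) ℝ) (i : Fin m) (j : Fin n) :
    |A i j| ≤ linf A :=
  (le_ciSup (Set.finite_range _).bddAbove j).trans
    (le_ciSup (f := fun i ↦ ⨆ j, |A i j|) (Set.finite_range _).bddAbove i)

theorem linf_le_of_forall_abs_apply_le {A : Matrix (Fin m) (Fin n) ℝ} {c : ℝ} (hc : 0 ≤ c)
    (h : ∀ i j, |A i j| ≤ c) : linf A ≤ c :=
  Real.iSup_le (fun i ↦ Real.iSup_le (h i) hc) hc

theorem sum_abs_apply_le_n11 (M : Matrix (Fin m) (Fin n) ℝ) (j : Fin n) :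
    ∑ i, |M i j| ≤ n11 M :=
  le_ciSup (f := fun j ↦ ∑ i, |M i j|) (Set.finite_range _).bddAbove j

theorem sum_abs_apply_le_nII (M : Matrix (Fin m) (Fin n) ℝ) (i : Fin m) :
    ∑ j, |M i j| ≤ nII M :=
  le_ciSup (f := fun i ↦ ∑ j, |M i j|) (Set.finite_range _).bddAbove i

theorem sqrt_sum_sq_le_two2inf (U : Matrix (Fin m) (Fin n) ℝ) (i : Fin m) :
    √(∑ k, U i k ^ 2) ≤ two2inf U :=
  le_ciSup (f := fun i ↦ √(∑ k, U i k ^ 2)) (Set.finite_range _).bddAbove i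

theorem linf_nonneg (A : Matrix (Fin m) (Fin n) ℝ) : 0 ≤ linf A :=
  Real.iSup_nonneg fun _ ↦ Real.iSup_nonneg fun _ ↦ abs_nonneg _

theorem n11_nonneg (M : Matrix (Fin m) (Fin n) ℝ) : 0 ≤ n11 M :=
  Real.iSup_nonneg fun _ ↦ Finset.sum_nonneg fun _ _ ↦ abs_nonneg _

theorem nII_nonneg (M : Matrix (Fin m) (Fin n) ℝ) : 0 ≤ nII M :=
  Real.iSup_nonneg fun _ ↦ Finset.sum_nonneg fun _ _ ↦ abs_nonneg _

theorem two2inf_nonneg (U : Matrix (Fin m) (Fin n) ℝ) : 0 ≤ two2inf U :=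
  Real.iSup_nonneg fun _ ↦ Real.sqrt_nonneg _

theorem spec_eq_l2_opNorm (M : Matrix (Fin m) (Fin n) ℝ) : spec M = ‖M‖ := rfl

theorem spec_nonneg (M : Matrix (Fin m) (Fin n) ℝ) : 0 ≤ spec M := norm_nonneg _

end Norms

theorem abs_mul_apply_le_linf_mul_n11 {m p n : ℕ} (A : Matrix (Fin m) (Fin p) ℝ)
    (M : Matrix (Fin p) (Fin n) ℝ) (i : Fin m) (j : Fin n) :
    |(A * M) i j| ≤ linf A * n11 M :=
  calc |(A * M) i j| ≤ ∑ a, |A i a| * |M a j| := by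
        simpa only [Matrix.mul_apply, abs_mul] using
          Finset.abs_sum_le_sum_abs (fun a ↦ A i a * M a j) Finset.univ
    _ ≤ ∑ a, linf A * |M a j| := by
        gcongr with a
        exact abs_apply_le_linf A i a
    _ = linf A * ∑ a, |M a j| := Finset.mul_sum _ _ _ |>.symm
    _ ≤ linf A * n11 M := by
        gcongr
        · exact linf_nonneg A
        · exact sum_abs_apply_le_n11 M j

theorem abs_mul_apply_le_linf_mul_nII {m p n : ℕ} (M : Matrix (Fin m) (Fin p) ℝ)
    (B : Matrix (Fin p) (Fin n) ℝ) (i : Fin m) (j : Fin n) :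
    |(M * B) i j| ≤ linf B * nII M :=
  calc |(M * B) i j| ≤ ∑ b, |M i b| * |B b j| := by
        simpa only [Matrix.mul_apply, abs_mul] using
          Finset.abs_sum_le_sum_abs (fun b ↦ M i b * B b j) Finset.univ
    _ ≤ ∑ b, |M i b| * linf B := by
        gcongr with b
        exact abs_apply_le_linf B b j
    _ = linf B * ∑ b, |M i b| := by rw [← Finset.sum_mul, mul_comm]
    _ ≤ linf B * nII M := by
        gcongr
        · exact linf_nonneg B
        · exact sum_abs_apply_le_nII M i

theorem abs_dotProduct_le_sqrt_mul_sqrt {ι : Type*} [Fintype ι] (x y : ι → ℝ) :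
    |x ⬝ᵥ y| ≤ √(∑ i, x i ^ 2) * √(∑ i, y i ^ 2) := by
  simpa [EuclideanSpace.inner_toLp_toLp, dotProduct_comm, EuclideanSpace.norm_eq] using
    abs_real_inner_le_norm (WithLp.toLp 2 x) (WithLp.toLp 2 y)

theorem sqrt_sum_sq_mulVec_le {m n : ℕ} (M : Matrix (Fin m) (Fin n) ℝ) (x : Fin n → ℝ) :
    √(∑ i, (M *ᵥ x) i ^ 2) ≤ spec M * √(∑ k, x k ^ 2) := by
  simpa [spec_eq_l2_opNorm, EuclideanSpace.norm_eq] using M.l2_opNorm_mulVec (WithLp.toLp 2 x)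

theorem mul_mul_transpose_apply {l p q r : Type*} [Fintype p] [Fintype q] (A : Matrix l p ℝ)
    (M : Matrix p q ℝ) (B : Matrix r q ℝ) (i : l) (j : r) :
    (A * M * Bᵀ) i j = A i ⬝ᵥ M *ᵥ B j := by
  rw [Matrix.mul_assoc, Matrix.mul_apply, dotProduct]
  simp [Matrix.mul_apply, mulVec, dotProduct]

theorem abs_mul_mul_transpose_apply_le {m p q n : ℕ} (A : Matrix (Fin m) (Fin p) ℝ)
    (M : Matrix (Fin p) (Fin q) ℝ) (B : Matrix (Fin n) (Fin q) ℝ) (i : Fin m) (j : Fin n) :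
    |(A * M * Bᵀ) i j| ≤ √(∑ a, A i a ^ 2) * spec M * √(∑ b, B j b ^ 2) := by
  rw [mul_mul_transpose_apply, mul_assoc]
  exact (abs_dotProduct_le_sqrt_mul_sqrt _ _).trans <|
    mul_le_mul_of_nonneg_left (sqrt_sum_sq_mulVec_le M (B j)) (Real.sqrt_nonneg _)

theorem isSymm_mul_transpose {ι κ R : Type*} [Fintype κ] [CommSemiring R] (W : Matrix ι κ R) :
    (W * Wᵀ).IsSymm := by
  rw [Matrix.IsSymm, Matrix.transpose_mul, Matrix.transpose_transpose]

theorem sum_sq_mul_transpose_apply {ι κ R : Type*} [Fintype ι] [Fintype κ] [DecidableEq κ]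
    [CommRing R] {W : Matrix ι κ R} (hW : Wᵀ * W = 1) (i : ι) :
    ∑ a, (W * Wᵀ) i a ^ 2 = ∑ k, W i k ^ 2 := by
  have hidem : W * Wᵀ * (W * Wᵀ) = W * Wᵀ := by
    rw [Matrix.mul_assoc, ← Matrix.mul_assoc Wᵀ, hW, Matrix.one_mul]
  calc ∑ a, (W * Wᵀ) i a ^ 2 = ∑ a, (W * Wᵀ) i a * (W * Wᵀ) a i := by
        simp_rw [sq, ← (isSymm_mul_transpose W).apply i]
    _ = (W * Wᵀ) i i := by rw [← Matrix.mul_apply, hidem]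
    _ = ∑ k, W i k ^ 2 := by simp [Matrix.mul_apply, sq]

theorem abs_projection_mul_projection_apply_le {m n r : ℕ} {U : Matrix (Fin m) (Fin r) ℝ}
    {V : Matrix (Fin n) (Fin r) ℝ} (hU : Uᵀ * U = 1) (hV : Vᵀ * V = 1)
    (M : Matrix (Fin m) (Fin n) ℝ) (i : Fin m) (j : Fin n) :
    |(U * Uᵀ * M * (V * Vᵀ)) i j| ≤ two2inf U * two2inf V * spec M := by
  rw [← (isSymm_mul_transpose V).eq]
  refine (abs_mul_mul_transpose_apply_le _ M _ i j).trans ?_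
  rw [sum_sq_mul_transpose_apply hU, sum_sq_mul_transpose_apply hV, mul_right_comm]
  gcongr
  exacts [spec_nonneg M, two2inf_nonneg U, sqrt_sum_sq_le_two2inf U i,
    sqrt_sum_sq_le_two2inf V j]

theorem abs_PT_apply_le {m n r : ℕ} {U : Matrix (Fin m) (Fin r) ℝ}
    {V : Matrix (Fin n) (Fin r) ℝ} (hU : Uᵀ * U = 1) (hV : Vᵀ * V = 1)
    (M : Matrix (Fin m) (Fin n) ℝ) (i : Fin m) (j : Fin n) :
    |PT U V M i j| ≤
      linf (U * Uᵀ) * n11 M + linf (V * Vᵀ) * nII M + two2inf U * two2inf V * spec M :=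
  calc |PT U V M i j|
      ≤ |(U * Uᵀ * M) i j| + |(M * (V * Vᵀ)) i j| + |(U * Uᵀ * M * (V * Vᵀ)) i j| := by
        simp only [PT, Matrix.sub_apply, Matrix.add_apply]
        exact (abs_sub _ _).trans (by gcongr; exact abs_add_le _ _)
    _ ≤ _ := by
        gcongr
        · exact abs_mul_apply_le_linf_mul_n11 _ M i j
        · exact abs_mul_apply_le_linf_mul_nII M _ i j
        · exact abs_projection_mul_projection_apply_le hU hV M i j

theorem PT_linf_bound_general {m n r : ℕ} (U : Matrix (Fin m) (Fin r) ℝ)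
    (V : Matrix (Fin n) (Fin r) ℝ) (hU : Uᵀ * U = 1) (hV : Vᵀ * V = 1)
    (M : Matrix (Fin m) (Fin n) ℝ) :
    linf (PT U V M) ≤
      linf (U * Uᵀ) * n11 M + linf (V * Vᵀ) * nII M
        + two2inf U * two2inf V * spec M := by
  have hbound_nonneg : 0 ≤
      linf (U * Uᵀ) * n11 M + linf (V * Vᵀ) * nII M + two2inf U * two2inf V * spec M := by
    have := linf_nonneg (U * Uᵀ); have := linf_nonneg (V * Vᵀ)
    have := n11_nonneg M; have := nII_nonneg M
    have := two2inf_nonneg U; have := two2inf_nonneg V; have := spec_nonneg M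
    positivity
  exact linf_le_of_forall_abs_apply_le hbound_nonneg (abs_PT_apply_le hU hV M)

/-- entrywise ∞-norm bound for the tangent-space projection. -/
theorem PT_linf_bound {m n r : ℕ} (U : Matrix (Fin m) (Fin r) ℝ)
    (V : Matrix (Fin n) (Fin r) ℝ) (hU : Uᵀ * U = 1) (hV : Vᵀ * V = 1)
    (M : Matrix (Fin m) (Fin n) ℝ) (ρ : ℝ) (hρ : 0 < ρ) :
    linf (PT U V M) ≤
      linf (U * Uᵀ) * n11 M + linf (V * Vᵀ) * nII M
        + two2inf U * two2inf V * spec M :=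
  PT_linf_bound_general U V hU hV M

end SLR
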